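/- For n ∈ ℕ, nonnegative reals α, β, k with 0 ≤ α ≤ β, and all x ∈ [0,1], the second central moment is bounded: K_n^{(α,β,k)}((e₁−x)²;x) ≤ ξ_{n,k}^{α,β}, where ξ_{n,k}^{α,β} = (1/(n+β+1))·[(k+1)/4 + β + 2α + ((α+1)³ − α³)/3]. -/

import Mathlib

open Finset Filter

/-- Pochhammer k-symbol: `(λ)_{m,k} = λ(λ+k)⋯(λ+(m-1)k)`. -/
noncomputable def pochK (lam k : ℝ) (m : ℕ) : ℝ :=
  ∏ i ∈ Finset.range m, (lam + i * k)

/-- Lupaş-type operator based on Polya distribution with Pochhammer k-symbol. -/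
noncomputable def LupasP (n : ℕ) (k : ℝ) (f : ℝ → ℝ) (x : ℝ) : ℝ :=
  (1 / pochK n k n) * ∑ m ∈ Finset.range (n + 1),
    (n.choose m : ℝ) * pochK (n * x) k m * pochK (n - n * x) k (n - m) * f (m / n)

/-- Kantorovich-Stancu modification of the Lupaş-type operator. -/
noncomputable def KantK (n : ℕ) (α β k : ℝ) (f : ℝ → ℝ) (x : ℝ) : ℝ :=
  ((n + β + 1) / pochK n k n) * ∑ m ∈ Finset.range (n + 1),
    (n.choose m : ℝ) * pochK (n * x) k m * pochK (n - n * x) k (n - m) *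
      ∫ t in ((m + α) / (n + β + 1))..((m + α + 1) / (n + β + 1)), f t

/-- Modulus of continuity of `f` on `[0,1]`. -/
noncomputable def modulus (f : ℝ → ℝ) (δ : ℝ) : ℝ :=
  sSup {y | ∃ x t : ℝ, x ∈ Set.Icc (0:ℝ) 1 ∧ t ∈ Set.Icc (0:ℝ) 1 ∧
    |t - x| ≤ δ ∧ y = |f t - f x|}

lemma pochK_zero (a k : ℝ) : pochK a k 0 = 1 := by simp [pochK]

lemma pochK_succ (a k : ℝ) (m : ℕ) : pochK a k (m+1) = pochK a k m * (a + m * k) := by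
  simp [pochK, Finset.prod_range_succ]

lemma pochK_succ' (a k : ℝ) (m : ℕ) : pochK a k (m+1) = a * pochK (a+k) k m := by
  unfold pochK
  have h : (∏ i ∈ Finset.range m, (a + (↑(i+1):ℝ) * k)) = ∏ i ∈ Finset.range m, ((a+k) + ↑i * k) :=
    Finset.prod_congr rfl fun i _ => by push_cast; ring
  rw [Finset.prod_range_succ', h]
  norm_num [mul_comm]

lemma pochK_pos (a k : ℝ) (ha : 0 < a) (hk : 0 ≤ k) (m : ℕ) : 0 < pochK a k m := by
  refine Finset.prod_pos fun i _ => ?_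
  positivity

lemma vand (k : ℝ) (n : ℕ) (a b : ℝ) :
    ∑ m ∈ Finset.range (n+1), (n.choose m : ℝ) * pochK a k m * pochK b k (n-m)
      = pochK (a+b) k n := by
  induction n with
  | zero => simp [pochK]
  | succ n ih =>
    rw [Finset.sum_range_succ']
    have h1 : ∀ i ∈ Finset.range (n+1),
        ((n+1).choose (i+1) : ℝ) * pochK a k (i+1) * pochK b k (n+1-(i+1))
        = (n.choose (i+1) : ℝ) * pochK a k (i+1) * pochK b k (n-i)
          + (n.choose i : ℝ) * pochK a k i * pochK b k (n-i) * (a + i*k) := by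
      intro i _
      rw [Nat.succ_sub_succ, Nat.choose_succ_succ, pochK_succ]
      push_cast; ring
    rw [Finset.sum_congr rfl h1, Finset.sum_add_distrib]
    have e1 : ∑ m ∈ Finset.range (n+2), (n.choose m : ℝ) * pochK a k m * pochK b k (n+1-m)
        = ∑ m ∈ Finset.range (n+1), (n.choose m : ℝ) * pochK a k m * pochK b k (n+1-m) := by
      rw [Finset.sum_range_succ]; simp
    have e2 : ∑ m ∈ Finset.range (n+2), (n.choose m : ℝ) * pochK a k m * pochK b k (n+1-m)
        = (∑ i ∈ Finset.range (n+1), (n.choose (i+1) : ℝ) * pochK a k (i+1) * pochK b k (n+1-(i+1)))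
          + (n.choose 0 : ℝ) * pochK a k 0 * pochK b k (n+1-0) :=
      Finset.sum_range_succ' (fun m => (n.choose m : ℝ) * pochK a k m * pochK b k (n+1-m)) (n+1)
    have e3 : ∑ i ∈ Finset.range (n+1), (n.choose (i+1) : ℝ) * pochK a k (i+1) * pochK b k (n+1-(i+1))
        = ∑ i ∈ Finset.range (n+1), (n.choose (i+1) : ℝ) * pochK a k (i+1) * pochK b k (n-i) :=
      Finset.sum_congr rfl fun i _ => by rw [Nat.succ_sub_succ]
    have e4 : ∑ m ∈ Finset.range (n+1), (n.choose m : ℝ) * pochK a k m * pochK b k (n+1-m)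
        = ∑ m ∈ Finset.range (n+1), (n.choose m : ℝ) * pochK a k m * pochK b k (n-m) * (b + ((n:ℝ)-m)*k) := by
      refine Finset.sum_congr rfl fun m hm => ?_
      have hm' : m ≤ n := Nat.lt_succ_iff.mp (Finset.mem_range.mp hm)
      have h5 : n + 1 - m = (n - m) + 1 := by omega
      rw [h5, pochK_succ]
      have h6 : ((n - m : ℕ) : ℝ) = (n:ℝ) - m := by push_cast [Nat.cast_sub hm']; ring
      rw [h6]; ring
    have h3 : ∑ m ∈ Finset.range (n+1), (n.choose m : ℝ) * pochK a k m * pochK b k (n-m) * (b + ((n:ℝ)-m)*k)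
        + ∑ i ∈ Finset.range (n+1), (n.choose i : ℝ) * pochK a k i * pochK b k (n-i) * (a + i*k)
        = (a + b + n*k) * ∑ m ∈ Finset.range (n+1), (n.choose m : ℝ) * pochK a k m * pochK b k (n-m) := by
      rw [← Finset.sum_add_distrib, Finset.mul_sum]
      exact Finset.sum_congr rfl fun m _ => by ring
    have e5 : ((n+1).choose 0 : ℝ) * pochK a k 0 * pochK b k (n+1-0)
        = (n.choose 0 : ℝ) * pochK a k 0 * pochK b k (n+1-0) := by norm_num
    rw [pochK_succ, ← ih, e5]
    linarith [e1, e2, e3, e4, h3]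

lemma momM1 (k : ℝ) (n : ℕ) (a b : ℝ) :
    ∑ m ∈ Finset.range (n+1), (m:ℝ) * (n.choose m : ℝ) * pochK a k m * pochK b k (n-m)
      = (n:ℝ) * a * pochK (a+b+k) k (n-1) := by
  cases n with
  | zero => simp
  | succ N =>
    rw [Finset.sum_range_succ']
    push_cast
    simp only [zero_mul, add_zero, Nat.add_sub_cancel]
    have h1 : ∀ i ∈ Finset.range (N+1),
        ((i:ℝ)+1) * ((N+1).choose (i+1) : ℝ) * pochK a k (i+1) * pochK b k (N-i)
        = ((N:ℝ)+1) * a * ((N.choose i : ℝ) * pochK (a+k) k i * pochK b k (N-i)) := by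
      intro i _
      have hc : (N+1) * N.choose i = (N+1).choose (i+1) * (i+1) := Nat.add_one_mul_choose_eq N i
      have hc' : ((N+1:ℕ):ℝ) * (N.choose i : ℝ) = ((N+1).choose (i+1) : ℝ) * ((i+1:ℕ):ℝ) := by
        exact_mod_cast congrArg (Nat.cast (R := ℝ)) hc
      rw [pochK_succ']
      push_cast at hc'
      linear_combination (-a) * pochK (a+k) k i * pochK b k (N-i) * hc'
    rw [Finset.sum_congr rfl h1, ← Finset.mul_sum, vand k N (a+k) b]
    have h4 : a + k + b = a + b + k := by ring
    rw [h4]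

lemma momM2 (k : ℝ) (n : ℕ) (a b : ℝ) :
    ∑ m ∈ Finset.range (n+1), (m:ℝ) * ((m:ℝ)-1) * (n.choose m : ℝ) * pochK a k m * pochK b k (n-m)
      = (n:ℝ) * ((n:ℝ)-1) * a * (a+k) * pochK (a+b+2*k) k (n-2) := by
  cases n with
  | zero => simp
  | succ N =>
    rw [Finset.sum_range_succ']
    push_cast
    simp only [zero_mul, add_zero]
    have h1 : ∀ i ∈ Finset.range (N+1),
        ((i:ℝ)+1) * (((i:ℝ)+1)-1) * ((N+1).choose (i+1) : ℝ) * pochK a k (i+1) * pochK b k (N-i)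
        = ((N:ℝ)+1) * a * ((i:ℝ) * (N.choose i : ℝ) * pochK (a+k) k i * pochK b k (N-i)) := by
      intro i _
      have hc : (N+1) * N.choose i = (N+1).choose (i+1) * (i+1) := Nat.add_one_mul_choose_eq N i
      have hc' : ((N+1:ℕ):ℝ) * (N.choose i : ℝ) = ((N+1).choose (i+1) : ℝ) * ((i+1:ℕ):ℝ) := by
        exact_mod_cast congrArg (Nat.cast (R := ℝ)) hc
      rw [pochK_succ']
      push_cast at hc'
      linear_combination (-(i:ℝ)) * a * pochK (a+k) k i * pochK b k (N-i) * hc'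
    rw [Finset.sum_congr rfl h1, ← Finset.mul_sum, momM1 k N (a+k) b]
    have h2 : a + k + b + k = a + b + 2*k := by ring
    rw [h2]
    ring

lemma sq_integ (p q x : ℝ) : (∫ t in p..q, (t-x)^2) = ((q-x)^3-(p-x)^3)/3 := by
  have h := intervalIntegral.integral_comp_sub_right (a := p) (b := q) (fun t => t^2) x
  rw [h, integral_pow]
  norm_num


set_option maxHeartbeats 1000000 in
set_option maxRecDepth 8000 in
theorem kant_central_moment_two_bound (n : ℕ) (hn : 0 < n) (α β k : ℝ)
    (hα : 0 ≤ α) (hαβ : α ≤ β) (hk : 0 ≤ k)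
    (x : ℝ) (hx : x ∈ Set.Icc (0:ℝ) 1) :
    KantK n α β k (fun t => (t - x) ^ 2) x ≤
      (1 / (n + β + 1)) * ((k + 1) / 4 + β + 2 * α + ((α + 1) ^ 3 - α ^ 3) / 3) := by
  obtain ⟨hx0, hx1⟩ := hx
  obtain ⟨N, rfl⟩ : ∃ N, n = N + 1 := ⟨n - 1, by omega⟩
  have hβ : 0 ≤ β := le_trans hα hαβ
  unfold KantK
  push_cast
  set D : ℝ := (N:ℝ) + 1 + β + 1 with hDdef
  have hD : 0 < D := by rw [hDdef]; positivity
  set a : ℝ := ((N:ℝ) + 1) * x with ha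
  set b : ℝ := (N:ℝ) + 1 - ((N:ℝ) + 1) * x with hb
  have hterm : ∀ m ∈ Finset.range (N+1+1),
      ((N+1).choose m : ℝ) * pochK a k m * pochK b k (N+1-m) *
        (∫ t in (((m:ℝ)+α)/D)..(((m:ℝ)+α+1)/D), (t-x)^2)
      = ((m:ℝ)*((m:ℝ)-1) * (((N+1).choose m : ℝ) * pochK a k m * pochK b k (N+1-m))
        + (2*(α - D*x)+2) * ((m:ℝ) * (((N+1).choose m : ℝ) * pochK a k m * pochK b k (N+1-m)))
        + ((α - D*x)^2+(α - D*x)+1/3) * (((N+1).choose m : ℝ) * pochK a k m * pochK b k (N+1-m))) / D^3 := by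
    intro m _
    rw [sq_integ]
    field_simp
    ring
  rw [Finset.sum_congr rfl hterm, ← Finset.sum_div]
  simp only [Finset.sum_add_distrib, ← Finset.mul_sum]
  have hM2 : ∑ m ∈ Finset.range (N+1+1), (m:ℝ)*((m:ℝ)-1) * (((N+1).choose m : ℝ) * pochK a k m * pochK b k (N+1-m))
      = ((N+1:ℕ):ℝ) * (((N+1:ℕ):ℝ)-1) * a * (a+k) * pochK (a+b+2*k) k (N+1-2) := by
    rw [← momM2 k (N+1) a b]
    exact Finset.sum_congr rfl fun m _ => by ring
  have hM1 : ∑ m ∈ Finset.range (N+1+1), (m:ℝ) * (((N+1).choose m : ℝ) * pochK a k m * pochK b k (N+1-m))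
      = ((N+1:ℕ):ℝ) * a * pochK (a+b+k) k (N+1-1) := by
    rw [← momM1 k (N+1) a b]
    exact Finset.sum_congr rfl fun m _ => by ring
  rw [hM2, hM1, vand k (N+1) a b]
  have hab : a + b = (N:ℝ) + 1 := by rw [ha, hb]; ring
  have hab2 : a + b + k = (N:ℝ) + 1 + k := by rw [hab]
  have hab3 : a + b + 2*k = (N:ℝ) + 1 + 2*k := by rw [hab]
  rw [hab3, hab2, hab]
  have hI1 : N + 1 - 1 = N := rfl
  have hI2 : N + 1 - 2 = N - 1 := rfl
  rw [hI1, hI2]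
  have hNcast : ((N+1:ℕ):ℝ) = (N:ℝ) + 1 := by push_cast; ring
  have hP : pochK ((N:ℝ) + 1) k (N + 1) = ((N:ℝ) + 1) * pochK ((N:ℝ) + 1 + k) k N := by
    have := pochK_succ' ((N:ℝ)+1) k N
    rw [this]
  rw [hP]
  push_cast
  set Q : ℝ := pochK ((N:ℝ) + 1 + k) k N with hQdef
  set R : ℝ := pochK ((N:ℝ) + 1 + 2*k) k (N-1) with hRdef
  have hQpos : 0 < Q := by rw [hQdef]; exact pochK_pos _ _ (by positivity) hk N
  have hNR : (N:ℝ) * ((N:ℝ) + 1 + k) * R = (N:ℝ) * Q := by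
    cases N with
    | zero => simp
    | succ M =>
      rw [hQdef, hRdef]
      have e1 : (((M+1:ℕ):ℝ)) + 1 + k + k = ((M+1:ℕ):ℝ) + 1 + 2*k := by ring
      rw [pochK_succ', e1]
      have e2 : (M+1) - 1 = M := rfl
      rw [e2]
      ring
  have hnk : (0:ℝ) < (N:ℝ) + 1 + k := by positivity
  clear_value D a b Q R
  set BIG : ℝ := (N:ℝ)*((N:ℝ)+1)*x*(((N:ℝ)+1)*x+k)
      + ((2*(α - D*x)+2)*((N:ℝ)+1)*x + (α - D*x)^2+(α - D*x)+1/3)*((N:ℝ)+1+k) with hBIGdef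
  clear_value BIG
  have hval : D / (((N:ℝ) + 1) * Q) *
      ((((N:ℝ)+1) * (((N:ℝ)+1) - 1) * a * (a + k) * R + (2*(α - D*x)+2) * (((N:ℝ)+1) * a * Q)
        + ((α - D*x)^2+(α - D*x)+1/3) * (((N:ℝ)+1) * Q)) / D^3)
      = BIG / (((N:ℝ)+1+k) * D^2) := by
    rw [div_mul_div_comm, div_eq_div_iff (by positivity) (mul_pos hnk (pow_pos hD 2)).ne']
    rw [ha, hBIGdef]
    linear_combination (D^3 * ((N:ℝ)+1) * (((N:ℝ)+1)*x) * (((N:ℝ)+1)*x + k)) * hNR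
  rw [hval]
  have hC : (0:ℝ) ≤ (k + 1) / 4 + β + 2 * α + ((α + 1) ^ 3 - α ^ 3) / 3 := by nlinarith
  have hBIG : BIG ≤ ((k + 1) / 4 + β + 2 * α + ((α + 1) ^ 3 - α ^ 3) / 3) * (((N:ℝ)+1+k) * D) := by
    rw [hBIGdef, hDdef]
    linarith [mul_nonneg (by positivity : (0:ℝ) ≤ (k+1) * ((N:ℝ)+1)^2) (by nlinarith [sq_nonneg (2*x-1)] : (0:ℝ) ≤ 1/4 - x*(1-x)),
      mul_nonneg (by positivity : (0:ℝ) ≤ (k+1)) (by positivity : (0:ℝ) ≤ ((N:ℝ)+1)*(β+1) + k*((N:ℝ)+1+β+1)),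
      mul_nonneg (mul_nonneg hnk.le (mul_nonneg hx0 (by linarith : (0:ℝ) ≤ 1 - x))) (sq_nonneg (β+1)),
      mul_nonneg hnk.le (mul_nonneg (by positivity : (0:ℝ) ≤ (N:ℝ)+1) (by linarith : (0:ℝ) ≤ β + 2*α)),
      mul_nonneg (mul_nonneg hnk.le (by linarith : (0:ℝ) ≤ β+1)) (by nlinarith : (0:ℝ) ≤ β*(1-x) + 2*α*(1+x)),
      mul_nonneg (mul_nonneg hnk.le (by positivity : (0:ℝ) ≤ (N:ℝ)+1+β)) (by nlinarith : (0:ℝ) ≤ 3*α^2+3*α+1)]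
  calc BIG / (((N:ℝ)+1+k) * D^2)
      ≤ (((k + 1) / 4 + β + 2 * α + ((α + 1) ^ 3 - α ^ 3) / 3) * (((N:ℝ)+1+k) * D)) / (((N:ℝ)+1+k) * D^2) := by
        gcongr
    _ = 1 / D * ((k + 1) / 4 + β + 2 * α + ((α + 1) ^ 3 - α ^ 3) / 3) := by
        field_simp
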